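/- Let 1 ≤ n' ≤ n and let A be a full-rank n'×n complex matrix with singular values σ₁(A) ≥ ... ≥ σ_{n'}(A) > 0 and rows X₁,...,X_{n'} ∈ ℂⁿ. For each 1 ≤ i ≤ n', let Wᵢ be the span of the n'−1 rows X₁,...,X_{i−1},X_{i+1},...,X_{n'}. Then ∑_{j=1}^{n'} σⱼ(A)^{−2} = ∑_{j=1}^{n'} dist(Xⱼ, Wⱼ)^{−2}. -/

import Mathlib

/-!
With `G` the Gram matrix of the rows `Xᵢ`, `A Aᴴ = Gᵀ`, so `∑ σⱼ⁻² = tr (A Aᴴ)⁻¹ = ∑ⱼ (G⁻¹)ⱼⱼ`.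
If `u` is the component of `Xⱼ` orthogonal to `Wⱼ`, then `‖u‖ = dist(Xⱼ, Wⱼ)`, and writing
`u = ∑ cᵢ Xᵢ` (so `cⱼ = 1`) gives `G c = ‖u‖² eⱼ`, whence `(G⁻¹)ⱼⱼ = ‖u‖⁻²`.
-/

open Matrix
open scoped InnerProductSpace

namespace Matrix.IsHermitian

variable {n 𝕜 : Type*} [RCLike 𝕜] [Fintype n] [DecidableEq n] {A : Matrix n n 𝕜}

theorem trace_cfc (hA : A.IsHermitian) (f : ℝ → ℝ) :
    (cfc f A).trace = ∑ i, (f (hA.eigenvalues i) : 𝕜) := by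
  rw [hA.cfc_eq, IsHermitian.cfc, Unitary.conjStarAlgAut_apply, trace_mul_cycle,
    Unitary.coe_star_mul_self, one_mul, trace_diagonal]
  rfl

theorem trace_inv (hA : A.IsHermitian) (hunit : IsUnit A) :
    A⁻¹.trace = ∑ i, ((hA.eigenvalues i : 𝕜))⁻¹ := by
  rw [nonsing_inv_eq_ringInverse, ← cfc_ringInverse_id (R := ℝ) A hunit hA.isSelfAdjoint,
    hA.trace_cfc]
  push_cast
  rfl

theorem trace_inv_eq_sum_inv_roots (hA : A.IsHermitian) (hunit : IsUnit A) :
    A⁻¹.trace = (A.charpoly.roots.map (·⁻¹)).sum := by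
  rw [hA.trace_inv hunit, hA.roots_charpoly_eq_eigenvalues, Multiset.map_map]
  rfl

end Matrix.IsHermitian

theorem Matrix.linearIndependent_row_iff_rank_eq {m n R : Type*} [Field R] [Fintype m]
    [Fintype n] (A : Matrix m n R) : LinearIndependent R A.row ↔ A.rank = Fintype.card m := by
  rw [linearIndependent_iff_card_eq_finrank_span, Set.finrank, ← rank_eq_finrank_span_row, eq_comm]

theorem Submodule.infDist_eq_norm_sub_starProjection {𝕜 E : Type*} [RCLike 𝕜]
    [NormedAddCommGroup E] [InnerProductSpace 𝕜 E] (K : Submodule 𝕜 E)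
    [K.HasOrthogonalProjection] (x : E) :
    Metric.infDist x K = ‖x - K.starProjection x‖ := by
  rw [Metric.infDist_eq_iInf, starProjection_minimal]
  simp_rw [dist_eq_norm]
  rfl

namespace Matrix

variable {n 𝕜 E : Type*} [RCLike 𝕜] [NormedAddCommGroup E] [InnerProductSpace 𝕜 E] [Fintype n]

theorem gram_toLp_rows_eq_transpose_mul_conjTranspose {m : Type*} (A : Matrix m n 𝕜) :
    gram 𝕜 (fun i ↦ (WithLp.equiv 2 (n → 𝕜)).symm (A i)) = (A * Aᴴ)ᵀ := by
  ext i j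
  simp [gram_apply, mul_apply, PiLp.inner_apply]

theorem gram_mulVec_apply (v : n → E) (c : n → 𝕜) (l : n) :
    (gram 𝕜 v *ᵥ c) l = ⟪v l, ∑ i, c i • v i⟫_𝕜 := by
  simp [mulVec, dotProduct, gram_apply, inner_sum, inner_smul_right, mul_comm]

variable [DecidableEq n]

theorem inv_gram_apply_self {v : n → E} (hv : LinearIndependent 𝕜 v) (j : n) :
    (gram 𝕜 v)⁻¹ j j =
      ((Metric.infDist (v j) (Submodule.span 𝕜 (v '' {i | i ≠ j}) : Set E) ^ 2 : ℝ) : 𝕜)⁻¹ := by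
  set K := Submodule.span 𝕜 (v '' {i | i ≠ j})
  have : FiniteDimensional 𝕜 K := FiniteDimensional.span_of_finite 𝕜 (Set.toFinite _)
  set u := v j - K.starProjection (v j)
  have hu_orth : u ∈ Kᗮ := K.sub_starProjection_mem_orthogonal (v j)
  have hu_ne : u ≠ 0 := by
    rw [Ne, sub_eq_zero]
    intro h
    refine hv.notMem_span_image (s := {i | i ≠ j}) (x := j) (by simp) ?_
    rw [h]
    exact K.starProjection_apply_mem _
  have hinner : ∀ l, ⟪v l, u⟫_𝕜 = (Pi.single j ((‖u‖ : 𝕜) ^ 2) : n → 𝕜) l := by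
    intro l
    rcases eq_or_ne l j with rfl | hl
    · have hsplit : v l = K.starProjection (v l) + u := (add_sub_cancel _ _).symm
      rw [Pi.single_eq_same, hsplit, inner_add_left,
        (K.mem_orthogonal u).mp hu_orth _ (K.starProjection_apply_mem _), zero_add,
        inner_self_eq_norm_sq_to_K]
    · rw [Pi.single_eq_of_ne hl]
      exact (K.mem_orthogonal u).mp hu_orth _ (Submodule.subset_span ⟨l, hl, rfl⟩)
  obtain ⟨c, hc⟩ : ∃ c : n → 𝕜, ∑ i, c i • v i = u :=
    (Submodule.mem_span_range_iff_exists_fun 𝕜).mp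
      (Submodule.sub_mem _ (Submodule.subset_span ⟨j, rfl⟩)
        (Submodule.span_mono (Set.image_subset_range v _) (K.starProjection_apply_mem (v j))))
  have hgram : gram 𝕜 v *ᵥ c = Pi.single j ((‖u‖ : 𝕜) ^ 2) := by
    ext l
    rw [gram_mulVec_apply, hc, hinner]
  have hu_sq : (‖u‖ : 𝕜) ^ 2 ≠ 0 := by simpa using hu_ne
  have hcj : c j = 1 := by
    -- `‖u‖² = ⟪u, u⟫ = star c ⬝ᵥ (gram 𝕜 v *ᵥ c) = conj (c j) * ‖u‖²`
    have h := star_dotProduct_gram_mulVec v c c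
    rw [hgram, hc, inner_self_eq_norm_sq_to_K, dotProduct_single, Pi.star_apply] at h
    simpa [hu_sq] using congrArg star h
  have hdet : IsUnit (gram 𝕜 v).det := (det_gram_ne_zero_iff_linearIndependent.mpr hv).isUnit
  have hc_inv : c = (gram 𝕜 v)⁻¹ *ᵥ Pi.single j ((‖u‖ : 𝕜) ^ 2) := by
    rw [← hgram, mulVec_mulVec, nonsing_inv_mul _ hdet, one_mulVec]
  have hcoeff := congrFun hc_inv j
  rw [mulVec_single, Pi.smul_apply, col_apply, op_smul_eq_mul, hcj] at hcoeff
  rw [K.infDist_eq_norm_sub_starProjection, eq_inv_of_mul_eq_one_left hcoeff.symm]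
  push_cast
  rfl

end Matrix

theorem stmt_4_general (n n' : ℕ)
    (A : Matrix (Fin n') (Fin n) ℂ) (hrank : A.rank = n')
    (σ : Fin n' → ℝ)
    (hσ : (Matrix.charpoly (A * A.conjTranspose)).roots
      = Multiset.map (fun i => ((σ i : ℂ)) ^ 2) Finset.univ.val) :
    ∑ j, (σ j ^ 2)⁻¹ =
      ∑ j, (Metric.infDist ((WithLp.equiv 2 (Fin n → ℂ)).symm (A j))
        ((Submodule.span ℂ
          ((fun i => (WithLp.equiv 2 (Fin n → ℂ)).symm (A i)) '' {i | i ≠ j}) :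
            Submodule ℂ (EuclideanSpace ℂ (Fin n))) : Set (EuclideanSpace ℂ (Fin n))) ^ 2)⁻¹ := by
  set X := fun i ↦ (WithLp.equiv 2 (Fin n → ℂ)).symm (A i)
  have hX : LinearIndependent ℂ X :=
    (A.linearIndependent_row_iff_rank_eq.mpr (by simpa using hrank)).map'
      (WithLp.linearEquiv 2 ℂ (Fin n → ℂ)).symm.toLinearMap (LinearEquiv.ker _)
  have hunit : IsUnit (A * Aᴴ) := by
    rw [isUnit_iff_isUnit_det, ← det_transpose, ← gram_toLp_rows_eq_transpose_mul_conjTranspose]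
    exact (det_gram_ne_zero_iff_linearIndependent.mpr hX).isUnit
  apply Complex.ofReal_injective
  push_cast
  calc ∑ j, ((σ j : ℂ) ^ 2)⁻¹ = (A * Aᴴ)⁻¹.trace := by
        rw [(isHermitian_mul_conjTranspose_self A).trace_inv_eq_sum_inv_roots hunit, hσ,
          Multiset.map_map]
        rfl
    _ = (gram ℂ X)⁻¹.trace := by
        rw [gram_toLp_rows_eq_transpose_mul_conjTranspose, ← transpose_nonsing_inv,
          trace_transpose]
    _ = _ := by
        simp only [trace, diag, inv_gram_apply_self hX]
        push_cast
        rfl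

/-- Negative second moment identity: for a full-rank `n' × n` complex matrix `A` with
singular values `σ₁ ≥ ... ≥ σ_{n'} > 0` and rows `X₁, ..., X_{n'}`,
`∑ⱼ σⱼ(A)⁻² = ∑ⱼ dist(Xⱼ, Wⱼ)⁻²` where `Wⱼ` is the span of the other rows. -/
theorem stmt_4 (n n' : ℕ) (hn'1 : 1 ≤ n') (hn' : n' ≤ n)
    (A : Matrix (Fin n') (Fin n) ℂ) (hrank : A.rank = n')
    (σ : Fin n' → ℝ) (hσ0 : ∀ i, 0 < σ i) (hσmono : Antitone σ)
    (hσ : (Matrix.charpoly (A * A.conjTranspose)).roots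
      = Multiset.map (fun i => ((σ i : ℂ)) ^ 2) Finset.univ.val) :
    ∑ j, (σ j ^ 2)⁻¹ =
      ∑ j, (Metric.infDist ((WithLp.equiv 2 (Fin n → ℂ)).symm (A j))
        ((Submodule.span ℂ
          ((fun i => (WithLp.equiv 2 (Fin n → ℂ)).symm (A i)) '' {i | i ≠ j}) :
            Submodule ℂ (EuclideanSpace ℂ (Fin n))) : Set (EuclideanSpace ℂ (Fin n))) ^ 2)⁻¹ :=
  stmt_4_general n n' A hrank σ hσ
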